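/- arXiv:2603.02151 — 4 statements merged into one kernel-verified Lean document; each statement's English description precedes it below -/
import Mathlib

section
/- Let G be a finite multigraph with vertices v_1,…,v_n. Suppose (o_1,o_2,o_3,…,o_n) and (o_1',o_2',o_3,…,o_n) are both outdegree vectors of orientations of G, with o_2 < o_2'. Then (o_1-1, o_2+1, o_3,…,o_n) is also the outdegree vector of some orientation of G. -/
open Finset

variable {V E : Type*}

/-- Number of connected components of the multigraph on vertex set `V`
with edges `A ⊆ E`, where `ends e` gives the (unordered) endpoints of `e`. -/
noncomputable def numComponents (ends : E → Sym2 V) (A : Finset E) : ℕ :=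
  Nat.card (SimpleGraph.fromRel fun x y => ∃ e ∈ A, ends e = s(x, y)).ConnectedComponent

/-- The spanning subgraph `(V, A)` of the multigraph is a forest:
no loops, no parallel edges, and the underlying simple graph is acyclic. -/
def IsForestEdges (ends : E → Sym2 V) (A : Finset E) : Prop :=
  (∀ e ∈ A, ¬ (ends e).IsDiag) ∧ Set.InjOn ends ↑A ∧
    (SimpleGraph.fromRel fun x y => ∃ e ∈ A, ends e = s(x, y)).IsAcyclic

/-- Subset-expansion evaluation of the Tutte polynomial of the multigraph. -/
noncomputable def tutteEval [Fintype V] [Fintype E] [DecidableEq E]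
    (ends : E → Sym2 V) (x y : ℤ) : ℤ :=
  ∑ A : Finset E,
    (x - 1) ^ (numComponents ends A - numComponents ends Finset.univ) *
      (y - 1) ^ (numComponents ends A + A.card - Fintype.card V)

/-- Tail of edge `e` under the orientation `σ` (edges carry a reference
direction `src e → tgt e`; `σ e = true` means the edge is flipped). -/
def otail (src tgt : E → V) (σ : E → Bool) (e : E) : V :=
  if σ e then tgt e else src e

/-- Head of edge `e` under the orientation `σ`. -/
def ohead (src tgt : E → V) (σ : E → Bool) (e : E) : V :=
  if σ e then src e else tgt e

/-- Outdegree of `v` under the orientation `σ`. -/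
def outdeg [Fintype E] [DecidableEq V] (src tgt : E → V) (σ : E → Bool) (v : V) : ℕ :=
  (Finset.univ.filter fun e => otail src tgt σ e = v).card

/-- Indegree of `v` under the orientation `σ`. -/
def indeg [Fintype E] [DecidableEq V] (src tgt : E → V) (σ : E → Bool) (v : V) : ℕ :=
  (Finset.univ.filter fun e => ohead src tgt σ e = v).card

/-- Score of `v` under the orientation `σ`: outdegree minus indegree. -/
def score [Fintype E] [DecidableEq V] (src tgt : E → V) (σ : E → Bool) (v : V) : ℤ :=
  (outdeg src tgt σ v : ℤ) - (indeg src tgt σ v : ℤ)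

/-- Score of `v` in the spanning subdigraph of `G_σ` with arc set `F`. -/
def scoreSub [DecidableEq V] (src tgt : E → V) (σ : E → Bool) (F : Finset E) (v : V) : ℤ :=
  ((F.filter fun e => otail src tgt σ e = v).card : ℤ) -
    ((F.filter fun e => ohead src tgt σ e = v).card : ℤ)

/-- Degree of `v` in the spanning subgraph with edge set `F` (loops count twice). -/
def degIn [DecidableEq V] (src tgt : E → V) (F : Finset E) (v : V) : ℕ :=
  (F.filter fun e => src e = v).card + (F.filter fun e => tgt e = v).card

/-- Directed reachability in the digraph `G_σ`. -/
def dirReach (src tgt : E → V) (σ : E → Bool) : V → V → Prop :=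
  Relation.ReflTransGen fun x y => ∃ e, otail src tgt σ e = x ∧ ohead src tgt σ e = y

section Aux

variable [Fintype E] [DecidableEq V] [DecidableEq E]

lemma outdeg_eq_sum (src tgt : E → V) (σ : E → Bool) (v : V) :
    (outdeg src tgt σ v : ℤ) = ∑ e' : E, if otail src tgt σ e' = v then (1 : ℤ) else 0 := by
  rw [outdeg, Finset.card_filter]
  push_cast
  rfl

lemma otail_update (src tgt : E → V) (σ : E → Bool) (e : E) :
    otail src tgt (Function.update σ e (!σ e)) e = ohead src tgt σ e := by
  simp only [otail, ohead, Function.update_self]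
  cases σ e <;> simp

lemma otail_update_ne (src tgt : E → V) (σ : E → Bool) (e e' : E) (h : e' ≠ e) :
    otail src tgt (Function.update σ e (!σ e)) e' = otail src tgt σ e' := by
  simp [otail, Function.update_of_ne h]

lemma outdeg_update (src tgt : E → V) (σ : E → Bool) (e : E) (v : V) :
    (outdeg src tgt (Function.update σ e (!σ e)) v : ℤ) =
      (outdeg src tgt σ v : ℤ) + (if ohead src tgt σ e = v then 1 else 0)
        - (if otail src tgt σ e = v then 1 else 0) := by
  rw [outdeg_eq_sum, outdeg_eq_sum]
  rw [← Finset.sum_erase_add _ _ (Finset.mem_univ e),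
      ← Finset.sum_erase_add _ _ (Finset.mem_univ e)]
  rw [Finset.sum_congr rfl (fun e' he' => by
    rw [otail_update_ne src tgt σ e e' (Finset.ne_of_mem_erase he')])]
  rw [otail_update]
  ring

/-- Key lemma: if `σ'` has strictly larger outdegree at `v2` than `σ`, then there is a
vertex `v1` where `σ'` has strictly smaller outdegree, and a one-unit transfer exists. -/
lemma key (src tgt : E → V) :
    ∀ n (σ σ' : E → Bool),
      (Finset.univ.filter fun e => σ e ≠ σ' e).card ≤ n →
      ∀ v2, outdeg src tgt σ v2 < outdeg src tgt σ' v2 →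
      ∃ (v1 : V) (τ : E → Bool),
        outdeg src tgt σ' v1 < outdeg src tgt σ v1 ∧
        outdeg src tgt τ v1 + 1 = outdeg src tgt σ v1 ∧
        outdeg src tgt τ v2 = outdeg src tgt σ v2 + 1 ∧
        ∀ v, v ≠ v1 → v ≠ v2 → outdeg src tgt τ v = outdeg src tgt σ v := by
  intro n
  induction n with
  | zero =>
    intro σ σ' hcard v2 hlt
    exfalso
    have hempty : (Finset.univ.filter fun e => σ e ≠ σ' e) = ∅ := by
      rw [← Finset.card_eq_zero]; omega
    have heq : σ = σ' := by
      funext e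
      by_contra h
      have hmem : e ∈ (Finset.univ.filter fun e => σ e ≠ σ' e) := by simp [h]
      rw [hempty] at hmem
      exact absurd hmem (Finset.notMem_empty e)
    rw [heq] at hlt; omega
  | succ n ih =>
    intro σ σ' hcard v2 hlt
    -- find an edge e with σ e ≠ σ' e, otail σ' e = v2, otail σ e ≠ v2
    have hex : ∃ e, σ e ≠ σ' e ∧ otail src tgt σ' e = v2 ∧ otail src tgt σ e ≠ v2 := by
      by_contra h
      push_neg at h
      have hsub : (Finset.univ.filter fun e => otail src tgt σ' e = v2)
          ⊆ Finset.univ.filter fun e => otail src tgt σ e = v2 := by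
        intro e he
        simp only [Finset.mem_filter, Finset.mem_univ, true_and] at he ⊢
        by_cases hd : σ e = σ' e
        · rw [← he]; simp [otail, hd]
        · exact of_not_not (fun hne => hne (h e hd he))
      have := Finset.card_le_card hsub
      rw [outdeg, outdeg] at hlt
      omega
    obtain ⟨e, hne, htail', htailne⟩ := hex
    have hσ'e : σ' e = !σ e := by
      cases h : σ e <;> cases h' : σ' e <;> simp_all
    have hhead : ohead src tgt σ e = v2 := by
      rw [← htail']
      simp [otail, ohead, hσ'e]
      cases σ e <;> simp
    set u := otail src tgt σ e with hu
    have huv2 : u ≠ v2 := htailne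
    set σ₁ := Function.update σ e (!σ e) with hσ₁
    -- outdegree changes
    have hΔ : ∀ v, (outdeg src tgt σ₁ v : ℤ) =
        (outdeg src tgt σ v : ℤ) + (if v2 = v then 1 else 0) - (if u = v then 1 else 0) := by
      intro v
      rw [hσ₁, outdeg_update, hhead, hu]
    have hd2 : outdeg src tgt σ₁ v2 = outdeg src tgt σ v2 + 1 := by
      have := hΔ v2
      simp [huv2] at this
      omega
    have hdu : outdeg src tgt σ₁ u + 1 = outdeg src tgt σ u := by
      have := hΔ u
      simp [Ne.symm huv2] at this
      omega
    have hdo : ∀ v, v ≠ u → v ≠ v2 → outdeg src tgt σ₁ v = outdeg src tgt σ v := by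
      intro v h1 h2
      have := hΔ v
      simp [Ne.symm h1, Ne.symm h2] at this
      omega
    by_cases hcase : outdeg src tgt σ' u < outdeg src tgt σ u
    · exact ⟨u, σ₁, hcase, hdu, hd2, fun v h1 h2 => hdo v h1 h2⟩
    · push_neg at hcase
      -- apply induction to σ₁, σ' at vertex u
      have hlt' : outdeg src tgt σ₁ u < outdeg src tgt σ' u := by omega
      have hcard' : (Finset.univ.filter fun e' => σ₁ e' ≠ σ' e').card ≤ n := by
        have hsub : (Finset.univ.filter fun e' => σ₁ e' ≠ σ' e')
            ⊆ (Finset.univ.filter fun e' => σ e' ≠ σ' e').erase e := by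
          intro e' he'
          simp only [Finset.mem_filter, Finset.mem_univ, true_and] at he'
          have hee : e' ≠ e := by
            intro h
            apply he'
            rw [h, hσ₁, Function.update_self, hσ'e]
          rw [Finset.mem_erase]
          refine ⟨hee, ?_⟩
          simp only [Finset.mem_filter, Finset.mem_univ, true_and]
          rwa [hσ₁, Function.update_of_ne hee] at he'
        have h1 := Finset.card_le_card hsub
        have h2 : e ∈ (Finset.univ.filter fun e' => σ e' ≠ σ' e') := by simp [hne]
        have h3 := Finset.card_erase_of_mem h2
        omega
      obtain ⟨v1, τ, hv1lt, hτ1, hτu, hτo⟩ := ih σ₁ σ' hcard' u hlt'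
      have hv1u : v1 ≠ u := fun h => by rw [h] at hv1lt; omega
      have hv1v2 : v1 ≠ v2 := by
        intro h
        rw [h] at hv1lt
        omega
      refine ⟨v1, τ, ?_, ?_, ?_, ?_⟩
      · rwa [hdo v1 hv1u hv1v2] at hv1lt
      · rw [hτ1, hdo v1 hv1u hv1v2]
      · rw [hτo v2 (Ne.symm hv1v2) (Ne.symm huv2), hd2]
      · intro v h1 h2
        by_cases hvu : v = u
        · rw [hvu, hτu]; omega
        · rw [hτo v h1 hvu, hdo v hvu h2]

end Aux

/-- If `(o₁, o₂, o₃, …, oₙ)` and `(o₁', o₂', o₃, …, oₙ)` are outdegree vectors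
of orientations of `G` with `o₂ < o₂'`, then `(o₁ - 1, o₂ + 1, o₃, …, oₙ)` is
also an outdegree vector of an orientation of `G`. -/
theorem stmt_5 [Fintype E] [DecidableEq V] (src tgt : E → V)
    (v1 v2 : V) (h12 : v1 ≠ v2) (σ σ' : E → Bool)
    (hagree : ∀ v, v ≠ v1 → v ≠ v2 → outdeg src tgt σ' v = outdeg src tgt σ v)
    (hlt : outdeg src tgt σ v2 < outdeg src tgt σ' v2) :
    ∃ τ : E → Bool,
      outdeg src tgt τ v1 + 1 = outdeg src tgt σ v1 ∧
      outdeg src tgt τ v2 = outdeg src tgt σ v2 + 1 ∧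
      ∀ v, v ≠ v1 → v ≠ v2 → outdeg src tgt τ v = outdeg src tgt σ v := by
  classical
  obtain ⟨v1', τ, hlt', h1, h2, h3⟩ := key src tgt _ σ σ' le_rfl v2 hlt
  have hv : v1' = v1 := by
    by_contra h
    have hv2 : v1' ≠ v2 := by intro hh; rw [hh] at hlt'; omega
    have := hagree v1' h hv2
    omega
  subst hv
  exact ⟨τ, h1, h2, h3⟩
end

section
/- Let G be a finite multigraph and O a fixed orientation of G. Then the number of distinct score vectors of orientations of G equals the number of distinct score vectors of spanning subdigraphs of the directed graph G_O. -/
/-!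
Writing `F` for the set of edges on which an orientation `σ` differs from the fixed
orientation `σ0`, every edge of `F` contributes the negative of its `σ0`-contribution to the
score, so `score σ = score σ0 - 2 • scoreSub σ0 F`. As `σ ↦ F` is a bijection between
orientations and edge sets, the score vectors of orientations are the image of the score
vectors of spanning subdigraphs of `G_{σ0}` under the injective map `s ↦ score σ0 - 2 • s`.
-/

open Finset

variable {V E : Type*}

section Reversal

variable [DecidableEq V] (src tgt : E → V)

def arcScore (σ : E → Bool) (e : E) (v : V) : ℤ :=
  (if otail src tgt σ e = v then 1 else 0) - (if ohead src tgt σ e = v then 1 else 0)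

def reverseOn [DecidableEq E] (σ : E → Bool) (F : Finset E) (e : E) : Bool :=
  if e ∈ F then !σ e else σ e

theorem scoreSub_eq_sum_arcScore (σ : E → Bool) (F : Finset E) (v : V) :
    scoreSub src tgt σ F v = ∑ e ∈ F, arcScore src tgt σ e v := by
  simp only [scoreSub, arcScore, sum_sub_distrib, card_filter]
  push_cast
  rfl

theorem score_eq_scoreSub_univ [Fintype E] (σ : E → Bool) :
    score src tgt σ = scoreSub src tgt σ univ :=
  rfl

theorem arcScore_reverseOn_of_mem [DecidableEq E] (σ : E → Bool) {F : Finset E} {e : E}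
    (he : e ∈ F) : arcScore src tgt (reverseOn σ F) e = -arcScore src tgt σ e := by
  funext v
  cases h : σ e <;> simp [arcScore, otail, ohead, reverseOn, he, h]

theorem arcScore_reverseOn_of_notMem [DecidableEq E] (σ : E → Bool) {F : Finset E} {e : E}
    (he : e ∉ F) : arcScore src tgt (reverseOn σ F) e = arcScore src tgt σ e := by
  have hσ : reverseOn σ F e = σ e := if_neg he
  unfold arcScore otail ohead
  rw [hσ]

theorem score_reverseOn [Fintype E] [DecidableEq E] (σ : E → Bool) (F : Finset E) :
    score src tgt (reverseOn σ F) = score src tgt σ - 2 • scoreSub src tgt σ F := by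
  funext v
  simp only [score_eq_scoreSub_univ, scoreSub_eq_sum_arcScore, Pi.sub_apply, Pi.smul_apply,
    ← sum_add_sum_compl F]
  rw [sum_congr rfl fun e he => congrFun (arcScore_reverseOn_of_mem src tgt σ he) v,
    sum_congr rfl fun e he =>
      congrFun (arcScore_reverseOn_of_notMem src tgt σ (mem_compl.mp he)) v]
  simp only [Pi.neg_apply, sum_neg_distrib]
  ring

theorem reverseOn_filter_ne [Fintype E] [DecidableEq E] (σ0 σ : E → Bool) :
    reverseOn σ0 (univ.filter fun e => σ e ≠ σ0 e) = σ := by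
  funext e
  cases h : σ e <;> cases h0 : σ0 e <;> simp [reverseOn, h, h0]

theorem reverseOn_surjective [Fintype E] [DecidableEq E] (σ0 : E → Bool) :
    Function.Surjective (reverseOn σ0) :=
  fun σ => ⟨_, reverseOn_filter_ne σ0 σ⟩

end Reversal

/-- For a fixed orientation `σ0` of `G`, the number of distinct score vectors
of orientations of `G` equals the number of distinct score vectors of spanning
subdigraphs of `G_{σ0}`. -/
theorem stmt_10 [Fintype E] [DecidableEq V] (src tgt : E → V) (σ0 : E → Bool) :
    Nat.card (Set.range fun σ : E → Bool => score src tgt σ) =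
      Nat.card (Set.range fun F : Finset E => scoreSub src tgt σ0 F) := by
  classical
  have hrange : (Set.range fun σ : E → Bool => score src tgt σ) =
      (fun s => score src tgt σ0 - 2 • s) ''
        Set.range fun F : Finset E => scoreSub src tgt σ0 F := by
    rw [← Set.range_comp, ← (reverseOn_surjective σ0).range_comp]
    congr 1
    funext F
    exact score_reverseOn src tgt σ0 F
  have hinj : Function.Injective fun s : V → ℤ => score src tgt σ0 - 2 • s :=
    sub_right_injective.comp (nsmul_right_injective two_ne_zero)
  rw [hrange, Nat.card_image_of_injective hinj]
end

section
/- Let G be a finite multigraph with a fixed orientation O. Then the number of distinct score vectors of spanning subdigraphs of G_O equals T_G(2,1), i.e., the number of spanning forests of G. In particular, this count is independent of the choice of orientation O. -/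
open Finset

variable {V E : Type*}

/-!
Both numbers satisfy the deletion–contraction recurrence `f(G) = f(G \ e) + f(G / e)` for a
non-loop edge `e`, are unchanged by deleting a loop, and equal `1` for the edgeless graph.

For forests this is the rank criterion: `A` is a forest iff `c(A) + |A| ≤ |V|`, where `c` counts
components, and contracting `e` keeps the components of `A ∪ {e}` while removing one edge and one
vertex.

For scores, let `T` be the score set of `G \ e` and `d = 𝟙 x - 𝟙 y` the score of the arc
`e = (x, y)`. The score set of `G` is `T ∪ (d + T)`, and that of `G / e` is the image of `T`
under the map moving the value at `y` onto `x`, whose fibres are the lines `g + ℤ d`. The key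
point is that `T` meets each such line in an interval: if `g` and `g + k d` (`k ≥ 1`) are the
scores of `F₁` and `F₂`, then `F₁ ∆ F₂`, with the arcs of `F₂` reversed, has net outflow `k` at
`y`, so it contains a directed path from `y` to `x`, and toggling that path in `F₂` gives the
score `g + (k - 1) d`. Hence `|T ∪ (d + T)| = |T| + #(lines met by T) = f(G \ e) + f(G / e)`.
-/

theorem Nat.card_eq_card_add_one_of_bijOn_compl_singleton {α β : Type*} [Finite α] {f : α → β}
    {b : α} (hf : Set.BijOn f {b}ᶜ Set.univ) : Nat.card α = Nat.card β + 1 := by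
  rw [← Set.ncard_univ β, ← hf.ncard_eq, ← Set.ncard_compl_add_ncard {b}, Set.ncard_singleton]

theorem Finset.card_filter_powerset_insert {α : Type*} [DecidableEq α] {s : Finset α} {a : α}
    (ha : a ∉ s) (p : Finset α → Prop) [DecidablePred p] :
    #{t ∈ (insert a s).powerset | p t} =
      #{t ∈ s.powerset | p t} + #{t ∈ s.powerset | p (insert a t)} := by
  simp only [Finset.card_filter, Finset.sum_powerset_insert ha]

open Pointwise in
/-- When `T` meets every line `g + ℤ d` in an interval and `π` collapses exactly these lines,
`T.image π` is in bijection with the lowest points `g ∈ T`, those with `g - d ∉ T`. -/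
theorem Finset.card_image_add_card_inter_vadd {M N : Type*} [AddCommGroup M] [DecidableEq M]
    [DecidableEq N] {T : Finset M} {d : M} {π : M → N} (h : M →+ ℤ) (hd : h d = 1)
    (hπ : ∀ g g', π g = π g' ↔ ∃ k : ℤ, g' = g + k • d)
    (hT : ∀ g ∈ T, ∀ k : ℤ, 0 < k → g + k • d ∈ T → g + (k - 1) • d ∈ T) :
    #(T.image π) + #(T ∩ (d +ᵥ T)) = #T := by
  have hinter : T ∩ (d +ᵥ T) = {g ∈ T | g - d ∈ T} := by
    ext g
    simp only [Finset.mem_inter, Finset.mem_vadd_finset, vadd_eq_add, Finset.mem_filter]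
    exact and_congr_right fun _ => ⟨fun ⟨g', hg', hgg'⟩ => by simpa [← hgg'],
      fun hg => ⟨g - d, hg, add_sub_cancel _ _⟩⟩
  have hdown : ∀ g ∈ T, ∀ k : ℤ, 0 < k → g + k • d ∈ T → (g + k • d) - d ∈ T :=
    fun g hg k hk hgk => by simpa [sub_smul, add_sub_assoc] using hT g hg k hk hgk
  rw [hinter, ← Finset.card_filter_add_card_filter_not (p := fun g => g - d ∈ T) (s := T),
    add_comm]
  congr 1
  symm
  refine Finset.card_bij (fun g _ => π g) (fun g hg => Finset.mem_image_of_mem _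
    (Finset.mem_filter.1 hg).1) ?_ ?_
  · intro g hg g' hg' hgg'
    simp only [Finset.mem_filter] at hg hg'
    obtain ⟨k, rfl⟩ := (hπ g g').1 hgg'
    rcases lt_trichotomy k 0 with hk | rfl | hk
    · refine absurd ?_ hg.2
      simpa using hdown _ hg'.1 (-k) (neg_pos.2 hk) (by simpa using hg.1)
    · simp
    · exact absurd (hdown g hg.1 k hk hg'.1) hg'.2
  · intro t ht
    obtain ⟨g₀, hg₀, rfl⟩ := Finset.mem_image.1 ht
    obtain ⟨g, hg, hmin⟩ := Finset.exists_min_image {g ∈ T | π g = π g₀} h ⟨g₀, by simp [hg₀]⟩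
    simp only [Finset.mem_filter] at hg hmin
    refine ⟨g, Finset.mem_filter.2 ⟨hg.1, fun hgd => ?_⟩, hg.2⟩
    have hπd : π (g - d) = π g₀ := hg.2 ▸ (hπ _ _).2 ⟨1, by simp⟩
    have := hmin (g - d) ⟨hgd, hπd⟩
    rw [map_sub, hd] at this
    omega

namespace SimpleGraph

variable {G H : SimpleGraph V}

theorem Reachable.map_of_adj_reachable {W : Type*} {H : SimpleGraph W} (f : V → W)
    (hf : ∀ u v, G.Adj u v → H.Reachable (f u) (f v)) {u v : V} (h : G.Reachable u v) :
    H.Reachable (f u) (f v) := by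
  rw [reachable_eq_reflTransGen] at h hf ⊢
  exact h.lift' f hf

theorem reachable_sup_edge_iff {x y u v : V} :
    (G ⊔ edge x y).Reachable u v ↔ G.Reachable u v ∨ (G.Reachable u x ∧ G.Reachable y v) ∨
      (G.Reachable u y ∧ G.Reachable x v) := by
  refine ⟨fun h => ?_, ?_⟩
  · rw [reachable_eq_reflTransGen] at h
    induction h with
    | refl => exact .inl .rfl
    | tail _ hadj ih =>
      rw [sup_adj, edge_adj] at hadj
      rcases hadj with hadj | ⟨⟨rfl, rfl⟩ | ⟨rfl, rfl⟩, -⟩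
      all_goals grind [Reachable.trans, Reachable.symm, Reachable.refl, Adj.reachable]
  · have hxy : (G ⊔ edge x y).Reachable x y := by
      by_cases h : x = y
      · exact h ▸ .rfl
      · exact Adj.reachable (by simp [edge_adj, h])
    rintro (h | ⟨h₁, h₂⟩ | ⟨h₁, h₂⟩)
    · exact h.mono le_sup_left
    · exact ((h₁.mono le_sup_left).trans hxy).trans (h₂.mono le_sup_left)
    · exact ((h₁.mono le_sup_left).trans hxy.symm).trans (h₂.mono le_sup_left)

theorem card_connectedComponent_bot :
    Nat.card (⊥ : SimpleGraph V).ConnectedComponent = Nat.card V :=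
  (Nat.card_congr <| Equiv.ofBijective _
    ⟨fun _ _ h => reachable_bot.1 (ConnectedComponent.exact h), Quot.mk_surjective⟩).symm

/-- Passing from `G` to `H` merges the component of `y` into another one and changes nothing
else. -/
theorem card_connectedComponent_eq_add_one [Finite V] (y : V)
    (hle : ∀ u v, G.Reachable u v → H.Reachable u v)
    (hinj : ∀ u v, ¬G.Reachable u y → ¬G.Reachable v y → H.Reachable u v → G.Reachable u v)
    (hsurj : ∀ w, ∃ u, ¬G.Reachable u y ∧ H.Reachable u w) :
    Nat.card G.ConnectedComponent = Nat.card H.ConnectedComponent + 1 := by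
  let f : G.ConnectedComponent → H.ConnectedComponent :=
    Quot.lift H.connectedComponentMk fun u v h => ConnectedComponent.sound (hle u v h)
  refine Nat.card_eq_card_add_one_of_bijOn_compl_singleton (f := f)
    (b := G.connectedComponentMk y) ⟨fun _ _ => Set.mem_univ _, ?_, ?_⟩
  · intro c hc c' hc'
    induction c using ConnectedComponent.ind
    induction c' using ConnectedComponent.ind
    simp only [Set.mem_compl_iff, Set.mem_singleton_iff, ConnectedComponent.eq] at hc hc'
    exact fun h => ConnectedComponent.sound (hinj _ _ hc hc' (ConnectedComponent.exact h))
  · refine fun c _ => c.ind fun w => ?_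
    obtain ⟨u, hu, huw⟩ := hsurj w
    exact ⟨G.connectedComponentMk u, by simpa using hu, ConnectedComponent.sound huw⟩

theorem card_connectedComponent_sup_edge_of_reachable {x y : V} (h : G.Reachable x y) :
    Nat.card (G ⊔ edge x y).ConnectedComponent = Nat.card G.ConnectedComponent :=
  Nat.card_congr <| Quot.congrRight fun _ _ => by
    rw [reachable_sup_edge_iff]
    grind [Reachable.trans, Reachable.symm]

theorem card_connectedComponent_sup_edge_add_one [Finite V] {x y : V} (h : ¬G.Reachable x y) :
    Nat.card (G ⊔ edge x y).ConnectedComponent + 1 = Nat.card G.ConnectedComponent := by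
  refine (card_connectedComponent_eq_add_one y (fun _ _ h => h.mono le_sup_left) ?_ ?_).symm
  · intro u v hu hv huv
    rw [reachable_sup_edge_iff] at huv
    grind [Reachable.symm]
  · intro w
    by_cases hw : G.Reachable w y
    · exact ⟨x, h, reachable_sup_edge_iff.2 (.inr (.inl ⟨.rfl, hw.symm⟩))⟩
    · exact ⟨w, hw, .rfl⟩

end SimpleGraph

section Forests

variable (ends : E → Sym2 V)

def edgeGraph (A : Finset E) : SimpleGraph V := SimpleGraph.fromEdgeSet (ends '' A)

variable {ends}

theorem fromRel_eq_edgeGraph (A : Finset E) :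
    SimpleGraph.fromRel (fun x y => ∃ e ∈ A, ends e = s(x, y)) = edgeGraph ends A := by
  ext u v
  simp only [SimpleGraph.fromRel_adj, edgeGraph, SimpleGraph.fromEdgeSet_adj, Set.mem_image,
    Finset.mem_coe, Sym2.eq_swap (a := v)]
  tauto

theorem numComponents_eq (A : Finset E) :
    numComponents ends A = Nat.card (edgeGraph ends A).ConnectedComponent := by
  rw [numComponents, fromRel_eq_edgeGraph]

theorem isForestEdges_iff {A : Finset E} : IsForestEdges ends A ↔
    (∀ e ∈ A, ¬(ends e).IsDiag) ∧ Set.InjOn ends A ∧ (edgeGraph ends A).IsAcyclic := by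
  rw [IsForestEdges, fromRel_eq_edgeGraph]

theorem edgeGraph_empty : edgeGraph ends (∅ : Finset E) = ⊥ := by
  simp [edgeGraph]

theorem isForestEdges_empty : IsForestEdges ends ∅ := by
  simp [isForestEdges_iff, edgeGraph_empty]

theorem numComponents_empty [Fintype V] : numComponents ends (∅ : Finset E) = Fintype.card V := by
  rw [numComponents_eq, edgeGraph_empty, SimpleGraph.card_connectedComponent_bot,
    Nat.card_eq_fintype_card]

variable [DecidableEq E]

theorem edgeGraph_insert {A : Finset E} {e : E} {x y : V} (he : ends e = s(x, y)) :
    edgeGraph ends (insert e A) = edgeGraph ends A ⊔ SimpleGraph.edge x y := by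
  rw [edgeGraph, edgeGraph, SimpleGraph.edge, ← SimpleGraph.fromEdgeSet_union, Finset.coe_insert,
    Set.image_insert_eq, he, Set.insert_eq, Set.union_comm]

theorem isForestEdges_insert_iff {A : Finset E} {e : E} {x y : V} (heA : e ∉ A)
    (he : ends e = s(x, y)) :
    IsForestEdges ends (insert e A) ↔
      IsForestEdges ends A ∧ ¬(edgeGraph ends A).Reachable x y := by
  have hadj : (edgeGraph ends A).Adj x y ↔ ends e ∈ ends '' A ∧ x ≠ y := by
    rw [edgeGraph, SimpleGraph.fromEdgeSet_adj, he]
  have hdiag : (ends e).IsDiag ↔ x = y := by rw [he, Sym2.mk_isDiag_iff]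
  simp only [isForestEdges_iff, edgeGraph_insert he, SimpleGraph.isAcyclic_sup_fromEdgeSet_iff,
    Finset.forall_mem_insert, Finset.coe_insert, Set.injOn_insert (Finset.mem_coe.not.2 heA),
    hadj, hdiag]
  constructor
  · rintro ⟨⟨hxy, hA⟩, ⟨hinj, hnew⟩, hacyc, hreach⟩
    exact ⟨⟨hA, hinj, hacyc⟩, fun h => by grind⟩
  · rintro ⟨⟨hA, hinj, hacyc⟩, hnr⟩
    have hxy : x ≠ y := fun h => hnr (h ▸ .rfl)
    exact ⟨⟨hxy, hA⟩, ⟨hinj, fun ⟨a, ha, hae⟩ =>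
      hnr (hadj.2 ⟨⟨a, ha, hae⟩, hxy⟩).reachable⟩, hacyc, fun h => absurd h hnr⟩

theorem numComponents_insert_of_reachable {A : Finset E} {e : E} {x y : V}
    (he : ends e = s(x, y)) (h : (edgeGraph ends A).Reachable x y) :
    numComponents ends (insert e A) = numComponents ends A := by
  rw [numComponents_eq, numComponents_eq, edgeGraph_insert he,
    SimpleGraph.card_connectedComponent_sup_edge_of_reachable h]

theorem numComponents_insert_add_one [Finite V] {A : Finset E} {e : E} {x y : V}
    (he : ends e = s(x, y)) (h : ¬(edgeGraph ends A).Reachable x y) :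
    numComponents ends (insert e A) + 1 = numComponents ends A := by
  rw [numComponents_eq, numComponents_eq, edgeGraph_insert he,
    SimpleGraph.card_connectedComponent_sup_edge_add_one h]

open Classical in
theorem card_forests_insert_of_isDiag {S : Finset E} {e : E} (heS : e ∉ S)
    (he : (ends e).IsDiag) :
    #{A ∈ (insert e S).powerset | IsForestEdges ends A} =
      #{A ∈ S.powerset | IsForestEdges ends A} := by
  rw [Finset.card_filter_powerset_insert heS, add_eq_left, Finset.card_eq_zero,
    Finset.filter_eq_empty_iff]
  exact fun A _ hA => hA.1 e (Finset.mem_insert_self e A) he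

variable [Fintype V]

theorem card_le_numComponents_add_card (A : Finset E) :
    Fintype.card V ≤ numComponents ends A + #A := by
  induction A using Finset.induction_on with
  | empty => rw [numComponents_empty, Finset.card_empty, add_zero]
  | insert e A heA ih =>
    obtain ⟨x, y, he⟩ : ∃ x y, ends e = s(x, y) := (ends e).ind fun x y => ⟨x, y, rfl⟩
    rw [Finset.card_insert_of_notMem heA]
    by_cases h : (edgeGraph ends A).Reachable x y
    · rw [numComponents_insert_of_reachable he h]; omega
    · have := numComponents_insert_add_one he h; omega

theorem isForestEdges_iff_numComponents_add_card_le {A : Finset E} :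
    IsForestEdges ends A ↔ numComponents ends A + #A ≤ Fintype.card V := by
  induction A using Finset.induction_on with
  | empty => simp [isForestEdges_empty, numComponents_empty]
  | insert e A heA ih =>
    obtain ⟨x, y, he⟩ : ∃ x y, ends e = s(x, y) := (ends e).ind fun x y => ⟨x, y, rfl⟩
    rw [isForestEdges_insert_iff heA he, ih, Finset.card_insert_of_notMem heA]
    by_cases h : (edgeGraph ends A).Reachable x y
    · have := card_le_numComponents_add_card (ends := ends) A
      rw [numComponents_insert_of_reachable he h]
      simp only [h, not_true_eq_false, and_false, false_iff]
      omega
    · have := numComponents_insert_add_one he h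
      simp only [h, not_false_eq_true, and_true]
      omega

end Forests

section Contraction

variable [DecidableEq V]

/-- Contracting the edge `xy` is modelled on the same vertex type: `y` is redirected to `x` and
stays behind as an isolated vertex, which accounts for the `+ 1` in `numComponents_merge`. -/
def merge (x y v : V) : V := if v = y then x else v

variable {x y : V}

theorem merge_of_ne {v : V} (h : v ≠ y) : merge x y v = v := if_neg h

theorem merge_left (hxy : x ≠ y) : merge x y x = x := merge_of_ne hxy

theorem merge_right : merge x y y = x := if_pos rfl

theorem merge_ne (hxy : x ≠ y) (v : V) : merge x y v ≠ y := by
  unfold merge; split_ifs with h <;> assumption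

variable {ends : E → Sym2 V} {A : Finset E}

theorem not_reachable_merge_right (hxy : x ≠ y) {u : V} (hu : u ≠ y) :
    ¬(edgeGraph (fun a => (ends a).map (merge x y)) A).Reachable u y := by
  refine SimpleGraph.not_reachable_of_neighborSet_right_eq_empty hu
    (Set.eq_empty_of_forall_notMem fun w ⟨⟨a, _, hwa⟩, _⟩ => ?_)
  have hya : y ∈ (ends a).map (merge x y) := by
    simp only at hwa
    exact hwa ▸ Sym2.mem_mk_left y w
  obtain ⟨z, -, hz⟩ := Sym2.mem_map.1 hya
  exact merge_ne hxy z hz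

variable [DecidableEq E] {e : E}

theorem reachable_merge_insert (hxy : x ≠ y) (he : ends e = s(x, y)) (v : V) :
    (edgeGraph ends (insert e A)).Reachable (merge x y v) v := by
  by_cases hv : v = y
  · subst hv
    rw [merge_right]
    exact SimpleGraph.Adj.reachable (by simp [edgeGraph_insert he, SimpleGraph.edge_adj, hxy])
  · rw [merge_of_ne hv]

theorem reachable_merge_of_reachable_insert (hxy : x ≠ y) (he : ends e = s(x, y)) {u v : V}
    (h : (edgeGraph ends (insert e A)).Reachable u v) :
    (edgeGraph (fun a => (ends a).map (merge x y)) A).Reachable (merge x y u) (merge x y v) := by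
  refine h.map_of_adj_reachable _ fun p q hpq => ?_
  obtain ⟨⟨a, ha, hap⟩, -⟩ := hpq
  rcases Finset.mem_insert.1 ha with rfl | ha
  · rw [he, Sym2.eq_iff] at hap
    rcases hap with ⟨rfl, rfl⟩ | ⟨rfl, rfl⟩ <;> simp [merge_left hxy, merge_right]
  · by_cases hpq : merge x y p = merge x y q
    · rw [hpq]
    · exact SimpleGraph.Adj.reachable ⟨⟨a, ha, by simp only [hap, Sym2.map_mk]⟩, hpq⟩

theorem reachable_insert_of_reachable_merge (hxy : x ≠ y) (he : ends e = s(x, y)) {u v : V}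
    (h : (edgeGraph (fun a => (ends a).map (merge x y)) A).Reachable u v) :
    (edgeGraph ends (insert e A)).Reachable u v := by
  refine h.map_of_adj_reachable id fun p q hpq => ?_
  obtain ⟨⟨a, ha, hap⟩, -⟩ := hpq
  obtain ⟨p₀, q₀, ha₀⟩ : ∃ p₀ q₀, ends a = s(p₀, q₀) := (ends a).ind fun p q => ⟨p, q, rfl⟩
  have h₀ : (edgeGraph ends (insert e A)).Reachable p₀ q₀ := by
    by_cases hpq : p₀ = q₀
    · rw [hpq]
    · exact SimpleGraph.Adj.reachable ⟨⟨a, Finset.mem_insert_of_mem ha, ha₀⟩, hpq⟩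
  have h₁ := ((reachable_merge_insert hxy he p₀).trans h₀).trans
    (reachable_merge_insert hxy he q₀).symm
  simp only [ha₀, Sym2.map_mk, Sym2.eq_iff] at hap
  rcases hap with ⟨rfl, rfl⟩ | ⟨rfl, rfl⟩
  exacts [h₁, h₁.symm]

theorem numComponents_merge [Finite V] (hxy : x ≠ y) (he : ends e = s(x, y)) :
    numComponents (fun a => (ends a).map (merge x y)) A = numComponents ends (insert e A) + 1 := by
  rw [numComponents_eq, numComponents_eq]
  refine SimpleGraph.card_connectedComponent_eq_add_one y
    (fun _ _ => reachable_insert_of_reachable_merge hxy he) (fun u v hu hv huv => ?_)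
    fun w => ⟨merge x y w, not_reachable_merge_right hxy (merge_ne hxy w),
      reachable_merge_insert hxy he w⟩
  have hu' : u ≠ y := by rintro rfl; exact hu .rfl
  have hv' : v ≠ y := by rintro rfl; exact hv .rfl
  simpa [merge_of_ne hu', merge_of_ne hv'] using reachable_merge_of_reachable_insert hxy he huv

open Classical in
theorem card_forests_insert [Fintype V] {S : Finset E} (heS : e ∉ S) (hxy : x ≠ y)
    (he : ends e = s(x, y)) :
    #{A ∈ (insert e S).powerset | IsForestEdges ends A} =
      #{A ∈ S.powerset | IsForestEdges ends A} +
        #{A ∈ S.powerset | IsForestEdges (fun a => (ends a).map (merge x y)) A} := by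
  rw [Finset.card_filter_powerset_insert heS (IsForestEdges ends)]
  congr 2
  refine Finset.filter_congr fun A hA => ?_
  rw [isForestEdges_iff_numComponents_add_card_le, isForestEdges_iff_numComponents_add_card_le,
    numComponents_merge hxy he,
    Finset.card_insert_of_notMem fun h => heS (Finset.mem_powerset.1 hA h)]
  omega

end Contraction

section Scores

open Pointwise

variable (src tgt : E → V) (σ : E → Bool)

theorem otail_comp {W : Type*} (f : V → W) (a : E) :
    otail (f ∘ src) (f ∘ tgt) σ a = f (otail src tgt σ a) := by
  unfold otail; split_ifs <;> rfl

theorem ohead_comp {W : Type*} (f : V → W) (a : E) :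
    ohead (f ∘ src) (f ∘ tgt) σ a = f (ohead src tgt σ a) := by
  unfold ohead; split_ifs <;> rfl

theorem otail_eq_ohead_iff (a : E) : otail src tgt σ a = ohead src tgt σ a ↔ src a = tgt a := by
  unfold otail ohead; split_ifs; exacts [eq_comm, Iff.rfl]

theorem mk_otail_ohead (a : E) : s(otail src tgt σ a, ohead src tgt σ a) = s(src a, tgt a) := by
  unfold otail ohead; split_ifs <;> simp [Sym2.eq_swap]

variable [DecidableEq V]

def arcVec (x y : V) : V → ℤ := Pi.single x 1 - Pi.single y 1

theorem arcVec_apply (x y v : V) :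
    arcVec x y v = (if x = v then 1 else 0) - (if y = v then 1 else 0) := by
  simp [arcVec, Pi.single_apply, eq_comm]

theorem arcVec_self (x : V) : arcVec x x = 0 := sub_self _

theorem arcVec_add_arcVec (x y z : V) : arcVec x y + arcVec y z = arcVec x z := by
  simp only [arcVec]; abel

theorem arcVec_swap (x y : V) : arcVec y x = -arcVec x y := (neg_sub _ _).symm

def collapse (x y : V) : (V → ℤ) →ₗ[ℤ] V → ℤ :=
  LinearMap.id + (LinearMap.proj y).smulRight (arcVec x y)

theorem collapse_apply (g : V → ℤ) : collapse x y g = g + g y • arcVec x y := rfl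

theorem collapse_single (v : V) : collapse x y (Pi.single v 1) = Pi.single (merge x y v) 1 := by
  rw [collapse_apply, arcVec, merge]
  by_cases hv : v = y
  · subst hv; simp
  · simp [hv]

theorem collapse_arcVec (u v : V) :
    collapse x y (arcVec u v) = arcVec (merge x y u) (merge x y v) := by
  rw [arcVec, map_sub, collapse_single, collapse_single, arcVec]

theorem collapse_eq_collapse_iff (hxy : x ≠ y) {g g' : V → ℤ} :
    collapse x y g = collapse x y g' ↔ ∃ k : ℤ, g' = g + k • arcVec x y := by
  constructor
  · intro h
    refine ⟨g y - g' y, ?_⟩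
    rw [collapse_apply, collapse_apply] at h
    linear_combination (norm := module) -h
  · rintro ⟨k, rfl⟩
    rw [map_add, map_zsmul, collapse_arcVec, merge_of_ne hxy, merge, if_pos rfl, arcVec_self,
      smul_zero, add_zero]

theorem scoreSub_eq_sum (F : Finset E) :
    scoreSub src tgt σ F = ∑ a ∈ F, arcVec (otail src tgt σ a) (ohead src tgt σ a) := by
  ext v
  simp only [scoreSub, Finset.sum_apply, arcVec_apply, Finset.sum_sub_distrib, Finset.sum_boole]

theorem scoreSub_singleton (a : E) :
    scoreSub src tgt σ {a} = arcVec (otail src tgt σ a) (ohead src tgt σ a) := by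
  rw [scoreSub_eq_sum, Finset.sum_singleton]

theorem scoreSub_merge (x y : V) (F : Finset E) :
    scoreSub (merge x y ∘ src) (merge x y ∘ tgt) σ F = collapse x y (scoreSub src tgt σ F) := by
  simp only [scoreSub_eq_sum, map_sum, collapse_arcVec, otail_comp, ohead_comp]

section

variable [DecidableEq E]

theorem scoreSub_insert {F : Finset E} {a : E} (ha : a ∉ F) :
    scoreSub src tgt σ (insert a F) =
      scoreSub src tgt σ F + arcVec (otail src tgt σ a) (ohead src tgt σ a) := by
  rw [scoreSub_eq_sum, scoreSub_eq_sum, Finset.sum_insert ha, add_comm]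

theorem scoreSub_symmDiff (F G : Finset E) :
    scoreSub src tgt σ (symmDiff F G) =
      scoreSub src tgt σ F + scoreSub src tgt (fun a => if a ∈ F then !σ a else σ a) G := by
  set u : E → V → ℤ := fun a => arcVec (otail src tgt σ a) (ohead src tgt σ a)
  have hu : ∀ a, arcVec (otail src tgt (fun a => if a ∈ F then !σ a else σ a) a)
      (ohead src tgt (fun a => if a ∈ F then !σ a else σ a) a) = if a ∈ F then -u a else u a := by
    intro a
    by_cases ha : a ∈ F
    · rw [if_pos ha, ← arcVec_swap]
      cases h : σ a <;> simp [otail, ohead, ha, h]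
    · simp [otail, ohead, ha, u]
  simp only [scoreSub_eq_sum, hu, Finset.sum_ite, Finset.sum_neg_distrib,
    Finset.filter_mem_eq_inter, Finset.filter_notMem_eq_sdiff, symmDiff_def, Finset.sup_eq_union,
    Finset.sum_union (disjoint_sdiff_sdiff (x := F)), ← Finset.sum_inter_add_sum_sdiff F G,
    Finset.inter_comm G F]
  abel

theorem exists_subset_scoreSub_eq_arcVec (D : Finset E) {x : V}
    (hx : 0 < scoreSub src tgt σ D x) :
    ∃ P ⊆ D, ∃ u, scoreSub src tgt σ D u < 0 ∧ scoreSub src tgt σ P = arcVec x u := by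
  -- Take an arc `a` out of `x`: either its head has negative score, or we recurse from it in
  -- `D.erase a`.
  induction D using Finset.strongInduction generalizing x with
  | H D ih =>
  obtain ⟨a, haD, rfl⟩ : ∃ a ∈ D, otail src tgt σ a = x := by
    by_contra! h
    have h0 : #{a ∈ D | otail src tgt σ a = x} = 0 :=
      Finset.card_eq_zero.2 (Finset.filter_eq_empty_iff.2 h)
    simp only [scoreSub, h0] at hx
    omega
  set z := ohead src tgt σ a
  have hD : ∀ v, scoreSub src tgt σ D v =
      scoreSub src tgt σ (D.erase a) v + arcVec (otail src tgt σ a) z v := by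
    intro v
    rw [← Pi.add_apply, ← scoreSub_insert _ _ _ (Finset.notMem_erase a D), Finset.insert_erase haD]
  by_cases hz : scoreSub src tgt σ D z < 0
  · exact ⟨{a}, Finset.singleton_subset_iff.2 haD, z, hz, scoreSub_singleton _ _ _ a⟩
  have hz' : 0 < scoreSub src tgt σ (D.erase a) z := by
    have := hD z
    by_cases hxz : otail src tgt σ a = z
    · rw [← hxz] at this ⊢
      simpa [this, arcVec_self] using hx
    · simp only [arcVec_apply, hxz, if_true, if_false] at this
      omega
  obtain ⟨P, hP, u, hu, hPu⟩ := ih _ (Finset.erase_ssubset haD) hz'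
  refine ⟨insert a P, Finset.insert_subset haD (hP.trans (Finset.erase_subset a D)), u, ?_, ?_⟩
  · have hzu : z ≠ u := fun h => by rw [h] at hz'; omega
    have hxu : otail src tgt σ a ≠ u := by
      rintro rfl
      have := hD (otail src tgt σ a)
      simp only [arcVec_apply] at this
      split_ifs at this <;> omega
    simpa [hD u, arcVec_apply, hxu, hzu] using hu
  · rw [scoreSub_insert _ _ _ fun h => Finset.notMem_erase a D (hP h), hPu, add_comm,
      arcVec_add_arcVec]

theorem exists_scoreSub_eq_sub_arcVec {F₁ F₂ : Finset E} {x y : V} {k : ℤ} (hxy : x ≠ y)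
    (hk : 0 < k) (h : scoreSub src tgt σ F₂ = scoreSub src tgt σ F₁ + k • arcVec x y) :
    ∃ F ⊆ F₁ ∪ F₂, scoreSub src tgt σ F = scoreSub src tgt σ F₂ - arcVec x y := by
  set σ' : E → Bool := fun a => if a ∈ F₂ then !σ a else σ a
  have hD : scoreSub src tgt σ' (symmDiff F₂ F₁) = k • arcVec y x := by
    have := scoreSub_symmDiff src tgt σ F₂ (symmDiff F₂ F₁)
    rw [symmDiff_symmDiff_cancel_left, h] at this
    rw [arcVec_swap]
    linear_combination (norm := module) -this
  obtain ⟨P, hP, u, hu, hPu⟩ := exists_subset_scoreSub_eq_arcVec src tgt σ' (symmDiff F₂ F₁)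
    (x := y) (by simp [hD, arcVec_apply, hxy, hk])
  obtain rfl : u = x := by
    by_contra hux
    simp only [hD, Pi.smul_apply, arcVec_apply, Ne.symm hux, if_false, smul_eq_mul] at hu
    split_ifs at hu <;> linarith
  refine ⟨symmDiff F₂ P, fun a ha => ?_, ?_⟩
  · have hPF := hP.trans Finset.symmDiff_subset_union
    rcases Finset.mem_union.1 (Finset.symmDiff_subset_union ha) with ha | ha
    · exact Finset.mem_union_right _ ha
    · exact Finset.union_comm F₂ F₁ ▸ hPF ha
  · rw [scoreSub_symmDiff, hPu, arcVec_swap, sub_eq_add_neg]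

end

variable [Fintype V]

def scoreSet (S : Finset E) : Finset (V → ℤ) := S.powerset.image (scoreSub src tgt σ)

variable {src tgt σ}

theorem mem_scoreSet {S : Finset E} {g : V → ℤ} :
    g ∈ scoreSet src tgt σ S ↔ ∃ F ⊆ S, scoreSub src tgt σ F = g := by
  simp [scoreSet]

theorem scoreSet_merge (x y : V) (S : Finset E) :
    scoreSet (merge x y ∘ src) (merge x y ∘ tgt) σ S =
      (scoreSet src tgt σ S).image (collapse x y) := by
  simp only [scoreSet, Finset.image_image]
  exact Finset.image_congr fun F _ => scoreSub_merge src tgt σ x y F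

variable [DecidableEq E]

theorem scoreSet_insert {S : Finset E} {e : E} (heS : e ∉ S) :
    scoreSet src tgt σ (insert e S) = scoreSet src tgt σ S ∪
      (arcVec (otail src tgt σ e) (ohead src tgt σ e) +ᵥ scoreSet src tgt σ S) := by
  rw [scoreSet, Finset.powerset_insert, Finset.image_union, Finset.image_image, scoreSet,
    ← Finset.image_vadd, Finset.image_image]
  congr 1
  refine Finset.image_congr fun F hF => ?_
  rw [Function.comp_apply, scoreSub_insert _ _ _ fun h => heS (Finset.mem_powerset.1 hF h),
    Function.comp_apply, vadd_eq_add, add_comm]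

theorem scoreSet_sub_arcVec_mem {S : Finset E} {x y : V} (hxy : x ≠ y) {g : V → ℤ}
    (hg : g ∈ scoreSet src tgt σ S) {k : ℤ} (hk : 0 < k)
    (hgk : g + k • arcVec x y ∈ scoreSet src tgt σ S) :
    g + (k - 1) • arcVec x y ∈ scoreSet src tgt σ S := by
  obtain ⟨F₁, hF₁, rfl⟩ := mem_scoreSet.1 hg
  obtain ⟨F₂, hF₂, hF₂k⟩ := mem_scoreSet.1 hgk
  obtain ⟨F, hF, hFs⟩ := exists_scoreSub_eq_sub_arcVec src tgt σ hxy hk hF₂k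
  refine mem_scoreSet.2 ⟨F, hF.trans (Finset.union_subset hF₁ hF₂), ?_⟩
  rw [hFs, hF₂k, sub_smul, one_smul, add_sub_assoc]

theorem card_scoreSet_insert {S : Finset E} {e : E} {x y : V} (heS : e ∉ S)
    (hx : otail src tgt σ e = x) (hy : ohead src tgt σ e = y) (hxy : x ≠ y) :
    #(scoreSet src tgt σ (insert e S)) =
      #(scoreSet src tgt σ S) + #(scoreSet (merge x y ∘ src) (merge x y ∘ tgt) σ S) := by
  rw [scoreSet_insert heS, hx, hy, scoreSet_merge]
  have hunion := Finset.card_union_add_card_inter (scoreSet src tgt σ S)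
    (arcVec x y +ᵥ scoreSet src tgt σ S)
  have hline := Finset.card_image_add_card_inter_vadd (T := scoreSet src tgt σ S)
    (π := collapse x y) (Pi.evalAddMonoidHom (fun _ => ℤ) x) (by simp [arcVec_apply, hxy.symm])
    (fun _ _ => collapse_eq_collapse_iff hxy)
    (fun g hg k hk hgk => scoreSet_sub_arcVec_mem hxy hg hk hgk)
  rw [Finset.card_vadd_finset] at hunion
  omega

theorem scoreSet_insert_of_eq {S : Finset E} {e : E} (heS : e ∉ S) (he : src e = tgt e) :
    scoreSet src tgt σ (insert e S) = scoreSet src tgt σ S := by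
  rw [scoreSet_insert heS, (otail_eq_ohead_iff src tgt σ e).2 he, arcVec_self, zero_vadd,
    Finset.union_self]

end Scores

open Classical in
theorem card_scoreSet_eq_card_forests [Fintype V] [DecidableEq V] [DecidableEq E]
    (S : Finset E) (src tgt : E → V) (σ : E → Bool) :
    #(scoreSet src tgt σ S) = #{A ∈ S.powerset | IsForestEdges (fun e => s(src e, tgt e)) A} := by
  induction S using Finset.induction_on generalizing src tgt with
  | empty => simp [scoreSet, Finset.filter_singleton, isForestEdges_empty]
  | insert e S heS ih =>
    by_cases he : src e = tgt e
    · rw [scoreSet_insert_of_eq heS he, card_forests_insert_of_isDiag heS (by simp [he]), ih]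
    · have hxy := (otail_eq_ohead_iff src tgt σ e).not.2 he
      rw [card_scoreSet_insert heS rfl rfl hxy,
        card_forests_insert heS hxy (mk_otail_ohead src tgt σ e).symm, ih]
      exact congrArg _ (ih _ _)

open Classical in
theorem tutteEval_two_one [Fintype V] [Fintype E] [DecidableEq E] (ends : E → Sym2 V) :
    tutteEval ends 2 1 = #{A : Finset E | IsForestEdges ends A} := by
  simp only [tutteEval, show (2 : ℤ) - 1 = 1 by norm_num, sub_self, one_pow, one_mul, zero_pow_eq,
    Nat.sub_eq_zero_iff_le, ← isForestEdges_iff_numComponents_add_card_le, Finset.sum_boole]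

/-- For any fixed orientation `σ0` of `G`, the number of distinct score vectors
of spanning subdigraphs of `G_{σ0}` equals `T_G(2,1)`, i.e. the number of
spanning forests of `G` (in particular it does not depend on `σ0`). -/
theorem stmt_12 [Fintype V] [Fintype E] [DecidableEq V] [DecidableEq E]
    (src tgt : E → V) (σ0 : E → Bool) :
    (Nat.card (Set.range fun F : Finset E => scoreSub src tgt σ0 F) : ℤ) =
        tutteEval (fun e => s(src e, tgt e)) 2 1 ∧
      Nat.card (Set.range fun F : Finset E => scoreSub src tgt σ0 F) =
        Nat.card {A : Finset E // IsForestEdges (fun e => s(src e, tgt e)) A} := by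
  classical
  have hscores : Nat.card (Set.range fun F : Finset E => scoreSub src tgt σ0 F) =
      #(scoreSet src tgt σ0 Finset.univ) := by
    rw [scoreSet, Finset.powerset_univ, ← Set.image_univ, ← Finset.coe_univ, ← Finset.coe_image,
      Nat.card_coe_set_eq, Set.ncard_coe_finset]
  have hforests : Nat.card {A : Finset E // IsForestEdges (fun e => s(src e, tgt e)) A} =
      #{A : Finset E | IsForestEdges (fun e => s(src e, tgt e)) A} := by
    rw [Nat.card_eq_fintype_card, Fintype.card_subtype]
  rw [hscores, hforests, tutteEval_two_one, card_scoreSet_eq_card_forests, Finset.powerset_univ]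
  exact ⟨rfl, rfl⟩
end

section
/- Let G be a finite multigraph with distinguished vertex v_1, and let O be an orientation of G. Color a vertex red if it is reachable from v_1 by a directed path in G_O, else green. For an orientation P of G, let S(P) be the sum over green vertices v of the outdegree of v in G_P. Then S(P) ≤ S(O) for every orientation P of G. -/
open Finset

variable {V E : Type*}

open Classical

/-- Coloring vertices green when unreachable from `v1` in `G_{σO}`, the sum of
outdegrees of green vertices under any orientation `σP` is at most the
corresponding sum under `σO`. -/
theorem stmt_19 [Fintype V] [Fintype E] [DecidableEq V]
    (src tgt : E → V) (σO σP : E → Bool) (v1 : V) :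
    ∑ v ∈ Finset.univ.filter (fun v => ¬ dirReach src tgt σO v1 v),
        outdeg src tgt σP v ≤
      ∑ v ∈ Finset.univ.filter (fun v => ¬ dirReach src tgt σO v1 v),
        outdeg src tgt σO v := by
  classical
  have key : ∀ σ : E → Bool,
      ∑ v ∈ Finset.univ.filter (fun v => ¬ dirReach src tgt σO v1 v), outdeg src tgt σ v
      = (Finset.univ.filter fun e => ¬ dirReach src tgt σO v1 (otail src tgt σ e)).card := by
    intro σ
    rw [Finset.card_eq_sum_card_fiberwise (f := otail src tgt σ)
      (t := Finset.univ.filter fun v => ¬ dirReach src tgt σO v1 v)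
      (fun e he => by simp at he ⊢; exact he)]
    apply Finset.sum_congr rfl
    intro v hv
    simp only [Finset.mem_filter] at hv
    unfold outdeg
    congr 1
    ext e
    simp only [Finset.mem_filter, Finset.mem_univ, true_and]
    constructor
    · intro h; exact ⟨h ▸ hv.2, h⟩
    · rintro ⟨_, h⟩; exact h
  rw [key σP, key σO]
  apply Finset.card_le_card
  intro e he
  simp only [Finset.mem_filter, Finset.mem_univ, true_and] at he ⊢
  intro hO
  apply he
  have hhead : dirReach src tgt σO v1 (ohead src tgt σO e) :=
    hO.tail ⟨e, rfl, rfl⟩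
  unfold otail ohead at *
  cases hσP : σP e <;> cases hσO : σO e <;> simp_all
end
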